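/- For all α > 0, all real numbers 0 ≤ a ≤ b with b > 0, and all t ≥ 0, one has ∫ (1 − (tx)^α)_+ ρ_{a,b}(dx) = (1 − (ta)^α)_+ · (1 − (tb)^α)_+, where ρ_{a,b} = (1 − (a/b)^α) δ_b + (a/b)^α T_b π_{2α}; explicitly, (1 − (ta)^α)_+ (1 − (tb)^α)_+ = (1 − (a/b)^α)(1 − (tb)^α)_+ + (a/b)^α ∫_1^∞ (1 − (tbs)^α)_+ · 2α s^{−2α−1} ds. -/

import Mathlib

open MeasureTheory Set

/-- The Pareto probability measure `π_{2α}` on `ℝ`, with density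
`2α x^(-(2α+1)) 1_{(1,∞)}(x)` with respect to Lebesgue measure. -/
noncomputable def pareto (α : ℝ) : Measure ℝ :=
  volume.withDensity
    (fun x => ENNReal.ofReal (if 1 < x then 2 * α * x ^ (-(2 * α) - 1) else 0))

/-!
Put `c = t b` and `r = (a / b) ^ α`, so that `(t a) ^ α = r c ^ α` and `0 ≤ r ≤ 1`. Against the
Pareto density `2α s ^ (-2α-1)` on `(1, ∞)` the function `s ↦ (1 - (c s) ^ α)_+` integrates to
`(1 - c ^ α)_+ ^ 2`, because `s ↦ -((s ^ (-α) - c ^ α)_+) ^ 2` is an antiderivative of the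
integrand and vanishes at infinity. The identity then reduces to
`(1 - r u)_+ (1 - u)_+ = (1 - r) (1 - u)_+ + r (1 - u)_+ ^ 2` with `u = c ^ α`, which holds
because both sides vanish for `u ≥ 1` and `1 - r u = (1 - r) + r (1 - u)` otherwise.
-/

open Filter Topology Asymptotics

theorem hasDerivAt_max_zero_sq (x : ℝ) :
    HasDerivAt (fun y : ℝ => max y 0 ^ 2) (2 * max x 0) x := by
  rcases lt_trichotomy x 0 with hx | rfl | hx
  · have hzero : (fun y : ℝ => max y 0 ^ 2) =ᶠ[𝓝 x] fun _ => 0 := by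
      filter_upwards [eventually_lt_nhds hx] with y hy
      simp [max_eq_right hy.le]
    simpa [max_eq_right hx.le] using (hasDerivAt_const x (0 : ℝ)).congr_of_eventuallyEq hzero
  · rw [hasDerivAt_iff_isLittleO_nhds_zero]
    simp only [zero_add, max_self, ne_eq, OfNat.ofNat_ne_zero, not_false_eq_true, zero_pow,
      sub_zero, mul_zero, smul_zero]
    refine IsBigO.trans_isLittleO (IsBigO.of_bound 1 (Eventually.of_forall fun h => ?_))
      (isLittleO_pow_id one_lt_two)
    rw [one_mul, norm_pow, norm_pow]
    gcongr
    simp only [Real.norm_eq_abs, abs_of_nonneg (le_max_right h 0)]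
    exact max_le (le_abs_self h) (abs_nonneg h)
  · have hsq : (fun y : ℝ => max y 0 ^ 2) =ᶠ[𝓝 x] fun y => y ^ 2 := by
      filter_upwards [eventually_gt_nhds hx] with y hy
      rw [max_eq_left hy.le]
    simpa [max_eq_left hx.le] using (hasDerivAt_pow 2 x).congr_of_eventuallyEq hsq

variable {α c : ℝ}

lemma max_one_sub_rpow_mul_paretoDensity (hc : 0 ≤ c) {s : ℝ} (hs : 0 < s) :
    max (1 - (c * s) ^ α) 0 * (2 * α * s ^ (-(2 * α) - 1))
      = 2 * α * s ^ (-α - 1) * max (s ^ (-α) - c ^ α) 0 := by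
  have hsplit : s ^ (-(2 * α) - 1) = s ^ (-α) * s ^ (-α - 1) := by
    rw [← Real.rpow_add hs]; ring_nf
  have hcancel : (1 - (c * s) ^ α) * s ^ (-α) = s ^ (-α) - c ^ α := by
    rw [Real.mul_rpow hc hs.le, Real.rpow_neg hs.le]
    field_simp [(Real.rpow_pos_of_pos hs α).ne']
  have hmax := max_mul_of_nonneg (1 - (c * s) ^ α) 0 (Real.rpow_pos_of_pos hs (-α)).le
  rw [zero_mul] at hmax
  rw [hsplit, ← hcancel, ← hmax]
  ring

lemma integrableOn_max_one_sub_rpow_mul_paretoDensity (hα : 0 < α) (hc : 0 ≤ c) :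
    IntegrableOn (fun s : ℝ => max (1 - (c * s) ^ α) 0 * (2 * α * s ^ (-(2 * α) - 1)))
      (Ioi 1) := by
  have hdens : IntegrableOn (fun s : ℝ => 2 * α * s ^ (-(2 * α) - 1)) (Ioi 1) :=
    (integrableOn_Ioi_rpow_of_lt (by linarith) one_pos).const_mul (2 * α)
  refine hdens.mono' (by fun_prop) ?_
  filter_upwards [ae_restrict_mem measurableSet_Ioi] with s (hs : 1 < s)
  have hpow : 0 ≤ (c * s) ^ α := by positivity
  rw [norm_mul, Real.norm_of_nonneg (le_max_right _ _), Real.norm_of_nonneg (by positivity)]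
  exact mul_le_of_le_one_left (by positivity) (max_le (by linarith) zero_le_one)

lemma integral_max_one_sub_rpow_mul_paretoDensity (hα : 0 < α) (hc : 0 ≤ c) :
    ∫ s in Ioi 1, max (1 - (c * s) ^ α) 0 * (2 * α * s ^ (-(2 * α) - 1))
      = max (1 - c ^ α) 0 ^ 2 := by
  set F : ℝ → ℝ := fun s => -max (s ^ (-α) - c ^ α) 0 ^ 2
  have hderiv : ∀ s ∈ Ici (1 : ℝ), HasDerivAt F
      (max (1 - (c * s) ^ α) 0 * (2 * α * s ^ (-(2 * α) - 1))) s := by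
    intro s (hs : 1 ≤ s)
    have hs0 : 0 < s := by linarith
    rw [max_one_sub_rpow_mul_paretoDensity hc hs0]
    refine (((hasDerivAt_max_zero_sq _).comp s
      ((Real.hasDerivAt_rpow_const (Or.inl hs0.ne')).sub_const (c ^ α))).neg).congr_deriv ?_
    ring
  have hlim : Tendsto F atTop (𝓝 (-max (0 - c ^ α) 0 ^ 2)) :=
    ((by fun_prop : Continuous fun u : ℝ => -max (u - c ^ α) 0 ^ 2).tendsto 0).comp
      (tendsto_rpow_neg_atTop hα)
  rw [integral_Ioi_of_hasDerivAt_of_tendsto' hderiv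
    (integrableOn_max_one_sub_rpow_mul_paretoDensity hα hc) hlim]
  simp [F, Real.rpow_nonneg hc]

lemma measurable_paretoDensity_toNNReal (α : ℝ) :
    Measurable fun x : ℝ => (if 1 < x then 2 * α * x ^ (-(2 * α) - 1) else 0).toNNReal :=
  (Measurable.ite measurableSet_Ioi (by fun_prop) measurable_const).real_toNNReal

lemma paretoDensity_toNNReal_smul (hα : 0 ≤ α) (g : ℝ → ℝ) :
    (fun x : ℝ => (if 1 < x then 2 * α * x ^ (-(2 * α) - 1) else 0).toNNReal • g x)
      = (Ioi 1).indicator fun s => g s * (2 * α * s ^ (-(2 * α) - 1)) := by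
  ext x
  by_cases hx : 1 < x
  · have hdens : 0 ≤ 2 * α * x ^ (-(2 * α) - 1) := by
      have : 0 < x := by linarith
      positivity
    rw [if_pos hx, indicator_of_mem (show x ∈ Ioi 1 from hx), NNReal.smul_def,
      Real.coe_toNNReal _ hdens, smul_eq_mul, mul_comm]
  · simp [hx]

lemma integral_pareto (hα : 0 ≤ α) (g : ℝ → ℝ) :
    ∫ x, g x ∂pareto α = ∫ s in Ioi 1, g s * (2 * α * s ^ (-(2 * α) - 1)) := by
  rw [← integral_indicator measurableSet_Ioi, ← paretoDensity_toNNReal_smul hα]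
  exact integral_withDensity_eq_integral_smul (measurable_paretoDensity_toNNReal α) g

lemma integrable_pareto_iff (hα : 0 ≤ α) {g : ℝ → ℝ} :
    Integrable g (pareto α)
      ↔ IntegrableOn (fun s => g s * (2 * α * s ^ (-(2 * α) - 1))) (Ioi 1) := by
  rw [← integrable_indicator_iff measurableSet_Ioi, ← paretoDensity_toNNReal_smul hα]
  exact integrable_withDensity_iff_integrable_smul (measurable_paretoDensity_toNNReal α)

lemma max_one_sub_mul_mul_max_one_sub {r u : ℝ} (hr0 : 0 ≤ r) (hr1 : r ≤ 1) :
    max (1 - r * u) 0 * max (1 - u) 0 = (1 - r) * max (1 - u) 0 + r * max (1 - u) 0 ^ 2 := by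
  rcases le_or_gt 1 u with hu1 | hu1
  · simp [max_eq_right (sub_nonpos.2 hu1)]
  · have hru : r * u ≤ 1 := by nlinarith
    rw [max_eq_left (by linarith), max_eq_left (by linarith)]
    ring

theorem kendall_kernel_williamson
    (α a b t : ℝ) (hα : 0 < α) (ha : 0 ≤ a) (hab : a ≤ b) (hb : 0 < b) (ht : 0 ≤ t) :
    (∫ x, max (1 - (t * x) ^ α) 0
        ∂(ENNReal.ofReal (1 - (a / b) ^ α) • Measure.dirac b
          + ENNReal.ofReal ((a / b) ^ α) • Measure.map (fun x => b * x) (pareto α))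
      = max (1 - (t * a) ^ α) 0 * max (1 - (t * b) ^ α) 0)
    ∧ max (1 - (t * a) ^ α) 0 * max (1 - (t * b) ^ α) 0
      = (1 - (a / b) ^ α) * max (1 - (t * b) ^ α) 0
        + (a / b) ^ α * ∫ s in Set.Ioi (1:ℝ),
            max (1 - (t * b * s) ^ α) 0 * (2 * α * s ^ (-(2 * α) - 1)) := by
  have hr0 : 0 ≤ (a / b) ^ α := by positivity
  have hr1 : (a / b) ^ α ≤ 1 :=
    Real.rpow_le_one (by positivity) ((div_le_one hb).2 hab) hα.le
  have hta : (t * a) ^ α = (a / b) ^ α * (t * b) ^ α := by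
    rw [← Real.mul_rpow (by positivity) (by positivity)]
    congr 1
    field_simp
  have hpareto : ∫ s in Ioi 1, max (1 - (t * b * s) ^ α) 0 * (2 * α * s ^ (-(2 * α) - 1))
      = max (1 - (t * b) ^ α) 0 ^ 2 :=
    integral_max_one_sub_rpow_mul_paretoDensity hα (by positivity)
  have hprod : max (1 - (t * a) ^ α) 0 * max (1 - (t * b) ^ α) 0
      = (1 - (a / b) ^ α) * max (1 - (t * b) ^ α) 0
        + (a / b) ^ α * max (1 - (t * b) ^ α) 0 ^ 2 := by
    rw [hta]
    exact max_one_sub_mul_mul_max_one_sub hr0 hr1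
  refine ⟨?_, by rw [hpareto, hprod]⟩
  have hscale := measurableEmbedding_mulLeft₀ hb.ne'
  have hint : Integrable (fun x => max (1 - (t * x) ^ α) 0)
      (Measure.map (fun x => b * x) (pareto α)) := by
    rw [hscale.integrable_map_iff, integrable_pareto_iff hα.le]
    simpa only [Function.comp_apply, mul_assoc] using
      integrableOn_max_one_sub_rpow_mul_paretoDensity hα (mul_nonneg ht hb.le)
  rw [integral_add_measure ((integrable_dirac (by simp)).smul_measure ENNReal.ofReal_ne_top)
      (hint.smul_measure ENNReal.ofReal_ne_top), integral_smul_measure, integral_smul_measure,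
    integral_dirac, hscale.integral_map, integral_pareto hα.le,
    ENNReal.toReal_ofReal (sub_nonneg.2 hr1), ENNReal.toReal_ofReal hr0, hprod]
  simp only [smul_eq_mul, ← mul_assoc t b, hpareto]
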